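/- arXiv:2306.03884 — 2 statements merged into one kernel-verified Lean document; each statement's English description precedes it below -/
import Mathlib

section
/- If n ≥ 4 and m > n, then there is no optimal (n,m)-graph: for every connected finite loopless multigraph G with n vertices and m edges and distinct terminals s,t, there exist a connected finite loopless multigraph H with n vertices and m edges, distinct terminals s',t' of H, and some p ∈ (0,1) with sRel(H,s',t';p) > sRel(G,s,t;p). -/
/-- A finite loopless multigraph: a finite vertex type `V`, a finite edge type `E`,
and an endpoint map assigning to each edge an unordered pair of distinct vertices. -/
structure Multigraph where
  V : Type
  E : Type
  [fintV : Fintype V]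
  [fintE : Fintype E]
  [decV : DecidableEq V]
  [decE : DecidableEq E]
  ends : E → Sym2 V
  loopless : ∀ e, ¬ (ends e).IsDiag

attribute [instance] Multigraph.fintV Multigraph.fintE Multigraph.decV Multigraph.decE

namespace Multigraph

/-- The simple graph on `G.V` underlying the spanning subgraph of `G` with edge set `E'`. -/
def subgraph (G : Multigraph) (E' : Finset G.E) : SimpleGraph G.V where
  Adj u v := u ≠ v ∧ ∃ e ∈ E', G.ends e = s(u, v)
  symm := ⟨by
    rintro u v ⟨huv, e, he, hends⟩
    exact ⟨huv.symm, e, he, hends.trans (Sym2.eq_swap)⟩⟩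
  loopless := ⟨by rintro u ⟨h, -⟩; exact h rfl⟩

/-- The spanning subgraph of `G` with edge set `E'` has exactly two connected components,
one containing `s` and the other containing `t`. -/
def SplitState (G : Multigraph) (s t : G.V) (E' : Finset G.E) : Prop :=
  ¬ (G.subgraph E').Reachable s t ∧
    ∀ v : G.V, (G.subgraph E').Reachable v s ∨ (G.subgraph E').Reachable v t

open scoped Classical in
/-- The split reliability of `G` with terminals `s` and `t`, at edge probability `p`. -/
noncomputable def sRel (G : Multigraph) (s t : G.V) (p : ℝ) : ℝ :=
  ∑ E' : Finset G.E, if G.SplitState s t E' then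
    p ^ E'.card * (1 - p) ^ (Fintype.card G.E - E'.card) else 0

open scoped Classical in
/-- `N_i(G,s,t)`: the number of edge subsets of cardinality `i` whose spanning subgraph has
exactly two connected components, one containing `s` and the other containing `t`. -/
noncomputable def Nst (G : Multigraph) (s t : G.V) (i : ℕ) : ℕ :=
  (Finset.univ.filter fun E' : Finset G.E => E'.card = i ∧ G.SplitState s t E').card

/-- A multigraph is connected when its underlying simple graph is. -/
def Connected (G : Multigraph) : Prop := (G.subgraph Finset.univ).Connected

open scoped Classical in
/-- The all-terminal reliability of `G` at edge probability `p`. -/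
noncomputable def Rel (G : Multigraph) (p : ℝ) : ℝ :=
  ∑ E' : Finset G.E, if (G.subgraph E').Connected then
    p ^ E'.card * (1 - p) ^ (Fintype.card G.E - E'.card) else 0

/-- `G` together with terminals `s ≠ t` is an optimal `(n,m)`-graph for split reliability. -/
def IsOptimal (n m : ℕ) (G : Multigraph) (s t : G.V) : Prop :=
  G.Connected ∧ Fintype.card G.V = n ∧ Fintype.card G.E = m ∧ s ≠ t ∧
    ∀ (H : Multigraph) (s' t' : H.V), H.Connected → Fintype.card H.V = n →
      Fintype.card H.E = m → s' ≠ t' → ∀ p : ℝ, 0 < p → p < 1 →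
        H.sRel s' t' p ≤ G.sRel s t p

/-- An isomorphism of multigraphs taking terminals `s,t` of `G` to terminals `u,v` of `H`. -/
def IsoTerm (G H : Multigraph) (s t : G.V) (u v : H.V) : Prop :=
  ∃ (φ : G.V ≃ H.V) (ψ : G.E ≃ H.E),
    (∀ e, H.ends (ψ e) = (G.ends e).map φ) ∧ φ s = u ∧ φ t = v

end Multigraph

namespace Multigraph

/-- `Gnm n m k`: the multigraph obtained from a path `v_0, v_1, …, v_{n-1}` (terminals
`s = v_0`, `t = v_{n-1}`) by replacing the path edge from `v_k` to `v_{k+1}` by a bundle of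
`m - n + 2` parallel edges (so that the graph has `m` edges in total when `m ≥ n - 1`). -/
def Gnm (n m k : ℕ) (hk : k < n - 1) : Multigraph where
  V := Fin n
  E := Fin m
  ends e :=
    if h : e.val < n - 1 then
      s((⟨e.val, by omega⟩ : Fin n), (⟨e.val + 1, by omega⟩ : Fin n))
    else
      s((⟨k, by omega⟩ : Fin n), (⟨k + 1, by omega⟩ : Fin n))
  loopless e := by
    by_cases h : e.val < n - 1 <;>
      simp [h, Sym2.mk_isDiag_iff, Fin.ext_iff]

/-- The cycle on `n ≥ 2` vertices. -/
def cycleGraph (n : ℕ) (hn : 2 ≤ n) : Multigraph where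
  V := Fin n
  E := Fin n
  ends e := s(e, (⟨(e.val + 1) % n, Nat.mod_lt _ (by omega)⟩ : Fin n))
  loopless e := by
    simp only [Sym2.mk_isDiag_iff, Fin.ext_iff, Fin.val_mk]
    intro hc
    rcases Nat.lt_or_ge (e.val + 1) n with h' | h'
    · rw [Nat.mod_eq_of_lt h'] at hc; omega
    · have he : e.val + 1 = n := by have := e.isLt; omega
      rw [he, Nat.mod_self] at hc
      omega

/-- The multigraph obtained from `G` by adjoining a new vertex (`none`) joined by a single
new edge to the vertex `u` of `G`. -/
def addPendant (G : Multigraph) (u : G.V) : Multigraph where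
  V := Option G.V
  E := Option G.E
  ends e := e.elim s(some u, none) (fun e' => (G.ends e').map some)
  loopless e := by
    cases e with
    | none => simp [Sym2.mk_isDiag_iff]
    | some e' =>
        show ¬ ((G.ends e').map some).IsDiag
        rw [Sym2.isDiag_map (Option.some_injective _)]
        exact G.loopless e'

/-- The disjoint union of two multigraphs. -/
def disjSum (A B : Multigraph) : Multigraph where
  V := A.V ⊕ B.V
  E := A.E ⊕ B.E
  ends := Sum.elim (fun e => (A.ends e).map Sum.inl) (fun e => (B.ends e).map Sum.inr)
  loopless e := by
    cases e with
    | inl e =>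
        show ¬ ((A.ends e).map Sum.inl).IsDiag
        rw [Sym2.isDiag_map Sum.inl_injective]
        exact A.loopless e
    | inr e =>
        show ¬ ((B.ends e).map Sum.inr).IsDiag
        rw [Sym2.isDiag_map Sum.inr_injective]
        exact B.loopless e

/-- The multigraph on three vertices `0, 1, 2` with a bundle of `a` parallel edges between
`0` and `1` and a bundle of `b` parallel edges between `1` and `2`. -/
def doubleBundle (a b : ℕ) : Multigraph where
  V := Fin 3
  E := Fin (a + b)
  ends e := if e.val < a then s((0 : Fin 3), (1 : Fin 3)) else s((1 : Fin 3), (2 : Fin 3))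
  loopless e := by
    by_cases h : e.val < a <;> simp [h, Sym2.mk_isDiag_iff]

/-- The multigraph on three vertices `0, 1, 2` with bundles of `a`, `b`, `c` parallel edges
between `0,1`, between `1,2`, and between `2,0` respectively. -/
def tripleBundle (a b c : ℕ) : Multigraph where
  V := Fin 3
  E := Fin (a + b + c)
  ends e :=
    if e.val < a then s((0 : Fin 3), (1 : Fin 3))
    else if e.val < a + b then s((1 : Fin 3), (2 : Fin 3))
    else s((2 : Fin 3), (0 : Fin 3))
  loopless e := by
    by_cases h : e.val < a
    · simp [h, Sym2.mk_isDiag_iff]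
    · by_cases h' : e.val < a + b <;> simp [h, h', Sym2.mk_isDiag_iff]

/-- The multigraph obtained from a path `v_0, …, v_{n-1}` by replacing the path edge at
position `k₁` by a bundle of `2` parallel edges and the path edge at position `k₂` by a
bundle of `m - n + 1` parallel edges (for `m ≥ n`, `k₁ ≠ k₂`, the graph has `m` edges). -/
def Gnm2 (n m k₁ k₂ : ℕ) (hk₁ : k₁ < n - 1) (hk₂ : k₂ < n - 1) : Multigraph where
  V := Fin n
  E := Fin m
  ends e :=
    if h : e.val < n - 1 then
      s((⟨e.val, by omega⟩ : Fin n), (⟨e.val + 1, by omega⟩ : Fin n))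
    else if e.val = n - 1 then
      s((⟨k₁, by omega⟩ : Fin n), (⟨k₁ + 1, by omega⟩ : Fin n))
    else
      s((⟨k₂, by omega⟩ : Fin n), (⟨k₂ + 1, by omega⟩ : Fin n))
  loopless e := by
    by_cases h : e.val < n - 1
    · simp [h, Sym2.mk_isDiag_iff, Fin.ext_iff]
    · by_cases h' : e.val = n - 1 <;> simp [h, h', Sym2.mk_isDiag_iff, Fin.ext_iff]

/-- The simple graph on `n ≥ 4` vertices consisting of a path `s = v_0, …, v_{n-3} = t` of
length `n - 3` together with two further vertices `v_{n-2}, v_{n-1}` forming a triangle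
with `t`. It has `n` vertices and `n` edges. -/
def triGraph (n : ℕ) (hn : 4 ≤ n) : Multigraph where
  V := Fin n
  E := Fin n
  ends e :=
    if h : e.val < n - 3 then
      s((⟨e.val, by omega⟩ : Fin n), (⟨e.val + 1, by omega⟩ : Fin n))
    else if e.val = n - 3 then
      s((⟨n - 3, by omega⟩ : Fin n), (⟨n - 2, by omega⟩ : Fin n))
    else if e.val = n - 2 then
      s((⟨n - 2, by omega⟩ : Fin n), (⟨n - 1, by omega⟩ : Fin n))
    else
      s((⟨n - 1, by omega⟩ : Fin n), (⟨n - 3, by omega⟩ : Fin n))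
  loopless e := by
    by_cases h : e.val < n - 3
    · simp [h, Sym2.mk_isDiag_iff, Fin.ext_iff]
    · by_cases h' : e.val = n - 3
      · simp only [dif_neg h, if_pos h', Sym2.mk_isDiag_iff, Fin.mk.injEq]; omega
      · by_cases h'' : e.val = n - 2
        · simp only [dif_neg h, if_neg h', if_pos h'', Sym2.mk_isDiag_iff, Fin.mk.injEq]; omega
        · simp only [dif_neg h, if_neg h', if_neg h'', Sym2.mk_isDiag_iff, Fin.mk.injEq]; omega

end Multigraph


open Finset SimpleGraph
open scoped Classical

/-!
Write `sRel(G; p) = ∑ᵢ Nᵢ pⁱ (1 - p)^(m - i)`, where `Nᵢ` counts the split states with `i` edges.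
If two graphs have the same coefficients below (above) some index and `H` has the larger one
there, then `H` is more reliable for small `p` (for `p` close to `1`). Split states have at least
`n - 2` edges, and a connected graph has no split state with all `m` edges.

If `N_{m-1}(G) < n - 2`, the path whose first edge is replaced by `m - n + 2` parallel edges wins
near `p = 1`: deleting any of its other `n - 2` edges leaves a split state.

Otherwise `G` has at least `n - 2` edges whose deletion splits `s` from `t`. The cuts of these
edges are nested, so they sort the vertices into more levels than there are such edges, while
every other edge stays inside one level. With `m > n` this forces exactly `n - 2` such edges and
all other edges parallel between the same two vertices, whence
`N_{n-2}(G) ≤ 1 + (n - 2)(m - n + 2)`. The path whose first two edges are replaced by bundles of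
`2` and `m - n + 1` parallel edges has `N_{n-2} = (m - n + 1) + 2 + 2(n - 3)(m - n + 1)`, which is
larger as soon as `n ≥ 4`, so it wins near `p = 0`.
-/

section

open Filter Topology

lemma exists_sum_pow_mul_one_sub_pow_pos {M K : ℕ} {c : ℕ → ℝ} (hK : K ≤ M)
    (hlow : ∀ i < K, c i = 0) (hcK : 0 < c K) :
    ∃ p : ℝ, 0 < p ∧ p < 1 ∧ 0 < ∑ i ∈ range (M + 1), c i * (p ^ i * (1 - p) ^ (M - i)) := by
  set g : ℝ → ℝ := fun p => ∑ i ∈ Ico K (M + 1), c i * (p ^ (i - K) * (1 - p) ^ (M - i))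
  have hg0 : g 0 = c K := by
    simp only [g]
    rw [sum_eq_single_of_mem K (mem_Ico.2 ⟨le_rfl, by omega⟩)]
    · simp
    · intro i hi hiK
      simp [zero_pow (Nat.sub_ne_zero_of_lt (lt_of_le_of_ne (mem_Ico.1 hi).1 (Ne.symm hiK)))]
  have hg : Continuous g := continuous_finsetSum _ fun i _ => by fun_prop
  have hev : ∀ᶠ p in 𝓝[>] (0 : ℝ), 0 < g p ∧ p < 1 :=
    (((hg.tendsto 0).eventually (lt_mem_nhds (hg0 ▸ hcK))).and
      (gt_mem_nhds one_pos)).filter_mono nhdsWithin_le_nhds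
  obtain ⟨p, ⟨hgp, hp1⟩, hp0⟩ := (hev.and self_mem_nhdsWithin).exists
  refine ⟨p, hp0, hp1, ?_⟩
  have hfactor : ∑ i ∈ range (M + 1), c i * (p ^ i * (1 - p) ^ (M - i)) = p ^ K * g p := by
    rw [mul_sum, ← sum_range_add_sum_Ico _ (by omega : K ≤ M + 1),
      sum_eq_zero fun i hi => by rw [hlow i (mem_range.1 hi), zero_mul], zero_add]
    refine sum_congr rfl fun i hi => ?_
    obtain ⟨j, rfl⟩ := Nat.exists_eq_add_of_le (mem_Ico.1 hi).1
    rw [Nat.add_sub_cancel_left, pow_add]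
    ring
  exact hfactor ▸ mul_pos (pow_pos hp0 K) hgp

end

lemma Finset.sym2_eq_of_card_le_card_image_add_one {α β : Type*} [Fintype α] [DecidableEq α]
    [DecidableEq β] {f : α → β} (hf : Fintype.card α ≤ #(univ.image f) + 1) {u w u' w' : α}
    (huw : u ≠ w) (h : f u = f w) (huw' : u' ≠ w') (h' : f u' = f w') : s(u', w') = s(u, w) := by
  have hinj : ∀ x y, y ≠ x → f x = f y → Set.InjOn f (univ.erase x) := by
    intro x y hyx hxy
    refine card_image_iff.1 (le_antisymm card_image_le ?_)
    calc #(univ.erase x) = Fintype.card α - 1 := by rw [card_erase_of_mem (mem_univ x), card_univ]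
      _ ≤ #(univ.image f) := by omega
      _ ≤ #((univ.erase x).image f) := card_le_card fun b hb => by
        obtain ⟨z, -, rfl⟩ := mem_image.1 hb
        obtain rfl | hzx := eq_or_ne z x
        · exact mem_image.2 ⟨y, mem_erase.2 ⟨hyx, mem_univ y⟩, hxy.symm⟩
        · exact mem_image_of_mem f (mem_erase.2 ⟨hzx, mem_univ z⟩)
  have hu : u' = u ∨ w' = u := by
    by_contra! hc
    exact huw' (hinj u w huw.symm h (by simp [hc.1]) (by simp [hc.2]) h')
  have hw : u' = w ∨ w' = w := by
    by_contra! hc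
    exact huw' (hinj w u huw h.symm (by simp [hc.1]) (by simp [hc.2]) h')
  rcases hu with rfl | rfl <;> rcases hw with rfl | rfl
  · exact absurd rfl huw
  · rfl
  · exact Sym2.eq_swap
  · exact absurd rfl huw

lemma Finset.eq_or_eq_insert_erase_of_card_sdiff_le_one {α : Type*} [DecidableEq α] {A B : Finset α}
    (hcard : #A = #B) (h : #(A \ B) ≤ 1) :
    A = B ∨ ∃ b ∈ B, ∃ e ∉ B, A = insert e (B.erase b) := by
  have hsd : #(A \ B) = #(B \ A) := by
    have := card_sdiff_add_card_inter A B
    have := card_sdiff_add_card_inter B A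
    rw [inter_comm] at this
    omega
  rcases Nat.le_one_iff_eq_zero_or_eq_one.1 h with h0 | h1
  · exact .inl (eq_of_subset_of_card_le (sdiff_eq_empty_iff_subset.1 (card_eq_zero.1 h0)) hcard.ge)
  · obtain ⟨e, he⟩ := card_eq_one.1 h1
    obtain ⟨b, hb⟩ := card_eq_one.1 (hsd ▸ h1)
    have he' := mem_sdiff.1 (he ▸ mem_singleton_self e)
    have hb' := mem_sdiff.1 (hb ▸ mem_singleton_self b)
    refine .inr ⟨b, hb'.1, e, he'.2, ext fun x => ?_⟩
    have hxe := congrArg (x ∈ ·) he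
    have hxb := congrArg (x ∈ ·) hb
    simp only [mem_sdiff, mem_singleton, eq_iff_iff] at hxe hxb
    simp only [mem_insert, mem_erase]
    tauto

namespace Multigraph

section Basic

variable (G : Multigraph)

lemma reachable_of_ends {E' : Finset G.E} {e : G.E} (he : e ∈ E') {u w : G.V}
    (h : G.ends e = s(u, w)) : (G.subgraph E').Reachable u w := by
  obtain rfl | huw := eq_or_ne u w
  · rfl
  · exact Adj.reachable ⟨huw, e, he, h⟩

lemma mem_iff_of_reachable {E' : Finset G.E} {S : Set G.V}
    (hS : ∀ e ∈ E', ∀ u w, G.ends e = s(u, w) → (u ∈ S ↔ w ∈ S)) {u w : G.V}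
    (h : (G.subgraph E').Reachable u w) : u ∈ S ↔ w ∈ S := by
  obtain ⟨p⟩ := h
  induction p with
  | nil => rfl
  | cons hadj _ ih =>
    obtain ⟨-, e, he, hends⟩ := hadj
    exact (hS e he _ _ hends).trans ih

lemma exists_ends_eq (e : G.E) : ∃ u w, G.ends e = s(u, w) :=
  Sym2.ind (fun u w => ⟨u, w, rfl⟩) (G.ends e)

lemma ne_of_ends_eq {e : G.E} {u w : G.V} (h : G.ends e = s(u, w)) : u ≠ w :=
  fun huw => G.loopless e (h ▸ Sym2.mk_isDiag_iff.2 huw)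

lemma ncard_edgeSet_subgraph_le (E' : Finset G.E) : (G.subgraph E').edgeSet.ncard ≤ #E' := by
  have hsub : (G.subgraph E').edgeSet ⊆ G.ends '' E' := by
    intro z
    induction z using Sym2.ind with
    | _ u w => rintro ⟨-, e, he, hends⟩; exact ⟨e, he, hends⟩
  calc (G.subgraph E').edgeSet.ncard ≤ (G.ends '' E').ncard := Set.ncard_le_ncard hsub
    _ ≤ #E' := Set.ncard_image_le (Finset.finite_toSet E') |>.trans (by simp)

/-- Joining `s` to `t` makes the spanning subgraph of a split state connected, and a connected
graph on `n` vertices has at least `n - 1` edges. -/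
lemma SplitState.card_le {s t : G.V} {E' : Finset G.E} (h : G.SplitState s t E') :
    Fintype.card G.V ≤ #E' + 2 := by
  set Γ := G.subgraph E' ⊔ edge s t
  have hts : Γ.Reachable t s := by
    obtain rfl | hts := eq_or_ne t s
    · rfl
    · exact Adj.reachable (Or.inr ((edge_adj ..).2 ⟨Or.inr ⟨rfl, rfl⟩, hts⟩))
  have hs : ∀ v, Γ.Reachable v s := fun v => by
    rcases h.2 v with hv | hv
    · exact hv.mono le_sup_left
    · exact (hv.mono le_sup_left).trans hts
  have hconn : Γ.Connected := (connected_iff _).2 ⟨fun u v => (hs u).trans (hs v).symm, ⟨s⟩⟩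
  have hedges : Γ.edgeSet.ncard ≤ #E' + 1 := by
    rw [edgeSet_sup]
    refine (Set.ncard_union_le _ _).trans (add_le_add (G.ncard_edgeSet_subgraph_le E') ?_)
    exact (Set.ncard_le_ncard edgeSet_edge_subset).trans (Set.ncard_singleton _).le
  have := hconn.card_vert_le_card_edgeSet_add_one
  rw [Nat.card_eq_fintype_card, Nat.card_coe_set_eq] at this
  omega

lemma Connected.card_le (hG : G.Connected) :
    Fintype.card G.V ≤ Fintype.card G.E + 1 := by
  have := hG.card_vert_le_card_edgeSet_add_one
  rw [Nat.card_eq_fintype_card, Nat.card_coe_set_eq] at this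
  exact this.trans (Nat.add_le_add_right ((G.ncard_edgeSet_subgraph_le univ).trans_eq card_univ) 1)

lemma Nst_eq_zero_of_lt {s t : G.V} {i : ℕ} (hi : i + 2 < Fintype.card G.V) :
    G.Nst s t i = 0 := by
  rw [Nst, card_eq_zero, filter_eq_empty_iff]
  rintro E' - ⟨rfl, hE'⟩
  exact absurd hE'.card_le (by omega)

lemma Nst_card_eq_zero (hG : G.Connected) (s t : G.V) : G.Nst s t (Fintype.card G.E) = 0 := by
  rw [Nst, card_eq_zero, filter_eq_empty_iff]
  rintro E' - ⟨hE', hsplit⟩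
  rw [card_eq_iff_eq_univ] at hE'
  exact hsplit.1 (hE' ▸ hG.preconnected s t)

lemma sRel_eq_sum (s t : G.V) (p : ℝ) :
    G.sRel s t p = ∑ i ∈ range (Fintype.card G.E + 1),
      (G.Nst s t i : ℝ) * (p ^ i * (1 - p) ^ (Fintype.card G.E - i)) := by
  rw [sRel, ← sum_fiberwise_of_maps_to (g := card) (t := range (Fintype.card G.E + 1))
    (fun E' _ => mem_range_succ_iff.2 (card_le_univ E'))]
  refine sum_congr rfl fun i _ => ?_
  rw [← sum_filter, filter_filter, sum_congr rfl fun E' hE' => by rw [(mem_filter.1 hE').2.1],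
    sum_const, nsmul_eq_mul, Nst]

end Basic

section Comparison

variable (G H : Multigraph) {s t : G.V} {s' t' : H.V}

lemma sRel_sub_sRel (hE : Fintype.card H.E = Fintype.card G.E) (p : ℝ) :
    H.sRel s' t' p - G.sRel s t p = ∑ i ∈ range (Fintype.card G.E + 1),
      ((H.Nst s' t' i : ℝ) - G.Nst s t i) * (p ^ i * (1 - p) ^ (Fintype.card G.E - i)) := by
  simp_rw [sRel_eq_sum, hE, ← sum_sub_distrib, sub_mul]

lemma exists_sRel_lt_of_Nst_lt_of_eq_below (hE : Fintype.card H.E = Fintype.card G.E) {K : ℕ}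
    (hK : K ≤ Fintype.card G.E) (heq : ∀ i < K, G.Nst s t i = H.Nst s' t' i)
    (hlt : G.Nst s t K < H.Nst s' t' K) :
    ∃ p : ℝ, 0 < p ∧ p < 1 ∧ G.sRel s t p < H.sRel s' t' p := by
  obtain ⟨p, hp0, hp1, hpos⟩ := exists_sum_pow_mul_one_sub_pow_pos hK
    (c := fun i => (H.Nst s' t' i : ℝ) - G.Nst s t i) (fun i hi => by simp [heq i hi])
    (sub_pos.2 (Nat.cast_lt.2 hlt))
  exact ⟨p, hp0, hp1, sub_pos.1 (sRel_sub_sRel G H hE p ▸ hpos)⟩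

lemma exists_sRel_lt_of_Nst_lt_of_eq_above (hE : Fintype.card H.E = Fintype.card G.E) {K : ℕ}
    (hK : K ≤ Fintype.card G.E)
    (heq : ∀ i, K < i → i ≤ Fintype.card G.E → G.Nst s t i = H.Nst s' t' i)
    (hlt : G.Nst s t K < H.Nst s' t' K) :
    ∃ p : ℝ, 0 < p ∧ p < 1 ∧ G.sRel s t p < H.sRel s' t' p := by
  set M := Fintype.card G.E
  set c : ℕ → ℝ := fun i => (H.Nst s' t' i : ℝ) - G.Nst s t i
  obtain ⟨q, hq0, hq1, hpos⟩ := exists_sum_pow_mul_one_sub_pow_pos (Nat.sub_le M K)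
    (c := fun j => c (M - j)) (fun j hj => by simp [c, heq (M - j) (by omega) (by omega)])
    (by simpa [c, Nat.sub_sub_self hK] using hlt)
  refine ⟨1 - q, by linarith, by linarith, sub_pos.1 ?_⟩
  -- substituting `1 - q` for `p` reverses the coefficient sequence
  rw [sRel_sub_sRel G H hE, ← sum_range_reflect]
  refine hpos.trans_eq (sum_congr rfl fun j hj => ?_)
  have hj : j ≤ M := Nat.lt_succ_iff.1 (mem_range.1 hj)
  rw [Nat.add_sub_cancel, Nat.sub_sub_self hj, sub_sub_cancel]
  ring

end Comparison

/-- `G` is a path `v 0, …, v (n - 1)` in which each position `i` carries the bundle of parallel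
edges `e` with `π e = i`. -/
structure IsPathLike (G : Multigraph) (n : ℕ) (v : ℕ → G.V) (π : G.E → ℕ) : Prop where
  lt : ∀ e, π e + 1 < n
  ends : ∀ e, G.ends e = s(v (π e), v (π e + 1))
  injOn : Set.InjOn v (Set.Iio n)
  surj : ∀ u, ∃ i < n, v i = u
  cover : ∀ i, i + 1 < n → ∃ e, π e = i

namespace IsPathLike

variable {G : Multigraph} {n : ℕ} {v : ℕ → G.V} {π : G.E → ℕ}

lemma reachable (hP : G.IsPathLike n v π) {E' : Finset G.E} {a c : ℕ} (hac : a ≤ c)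
    (hc : c < n) (hcov : ∀ i, a ≤ i → i < c → ∃ e ∈ E', π e = i) :
    (G.subgraph E').Reachable (v a) (v c) := by
  induction c, hac using Nat.le_induction with
  | base => rfl
  | succ c hac ih =>
    obtain ⟨e, he, hec⟩ := hcov c hac (Nat.lt_succ_self c)
    refine (ih (by omega) fun i h1 h2 => hcov i h1 (by omega)).trans ?_
    exact G.reachable_of_ends he (hec ▸ hP.ends e)

lemma connected (hP : G.IsPathLike n v π) : G.Connected := by
  have h0 : ∀ i < n, (G.subgraph univ).Reachable (v i) (v 0) := fun i hi =>
    (hP.reachable (Nat.zero_le i) hi fun j _ hj =>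
      (hP.cover j (by omega)).imp fun e he => ⟨mem_univ e, he⟩).symm
  refine (connected_iff _).2 ⟨fun u w => ?_, ⟨v 0⟩⟩
  obtain ⟨i, hi, rfl⟩ := hP.surj u
  obtain ⟨j, hj, rfl⟩ := hP.surj w
  exact (h0 i hi).trans (h0 j hj).symm

lemma zero_ne (hP : G.IsPathLike n v π) (hn : 1 < n) : v 0 ≠ v (n - 1) := fun h => by
  have := hP.injOn (show 0 < n by omega) (show n - 1 < n by omega) h
  omega

lemma splitState (hP : G.IsPathLike n v π) {E' : Finset G.E} {j : ℕ} (hj : j + 1 < n)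
    (hE' : ∀ e ∈ E', π e ≠ j) (hcov : ∀ i, i + 1 < n → i ≠ j → ∃ e ∈ E', π e = i) :
    G.SplitState (v 0) (v (n - 1)) E' := by
  refine ⟨fun h => ?_, fun u => ?_⟩
  · have hmem : ∀ i < n, v i ∈ v '' Set.Iic j ↔ i ≤ j := fun i hi =>
      hP.injOn.mem_image_iff (fun k hk => show k < n by simp at hk; omega) hi
    have hS : ∀ e ∈ E', ∀ u w, G.ends e = s(u, w) →
        (u ∈ v '' Set.Iic j ↔ w ∈ v '' Set.Iic j) := by
      intro e he u w
      have := hP.lt e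
      have := hE' e he
      rw [hP.ends e, Sym2.eq_iff]
      rintro (⟨rfl, rfl⟩ | ⟨rfl, rfl⟩) <;> rw [hmem _ (by omega), hmem _ (by omega)] <;> omega
    have := (G.mem_iff_of_reachable hS h).1 ((hmem 0 (by omega)).2 (Nat.zero_le j))
    rw [hmem _ (by omega)] at this
    omega
  · obtain ⟨i, hi, rfl⟩ := hP.surj u
    rcases le_or_gt i j with hij | hij
    · exact .inl (hP.reachable (Nat.zero_le i) hi fun k _ hk => hcov k (by omega) (by omega)).symm
    · exact .inr (hP.reachable (by omega) (by omega) fun k hk _ => hcov k (by omega) (by omega))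

lemma splitState_erase (hP : G.IsPathLike n v π) {e : G.E} (he : ∀ e', π e' = π e → e' = e) :
    G.SplitState (v 0) (v (n - 1)) (univ.erase e) := by
  refine hP.splitState (hP.lt e) (fun e' he' h => (mem_erase.1 he').1 (he e' h)) fun i hi hie => ?_
  obtain ⟨e', he'⟩ := hP.cover i hi
  exact ⟨e', mem_erase.2 ⟨by rintro rfl; exact hie he'.symm, mem_univ e'⟩, he'⟩

lemma card_le_Nst_card_sub_one (hP : G.IsPathLike n v π) {S : Finset G.E}
    (hS : ∀ e ∈ S, ∀ e', π e' = π e → e' = e) :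
    #S ≤ G.Nst (v 0) (v (n - 1)) (Fintype.card G.E - 1) :=
  card_le_card_of_injOn (univ.erase ·) (fun e he => by simp [card_erase_of_mem,
    hP.splitState_erase (hS e he)]) (univ.erase_injOn.mono (by simp))

lemma splitState_of_bijOn (hP : G.IsPathLike n v π) {E' : Finset G.E} {j : ℕ} (hj : j + 1 < n)
    (hE' : Set.BijOn π E' ((range (n - 1)).erase j)) :
    G.SplitState (v 0) (v (n - 1)) E' ∧ #E' = n - 2 := by
  refine ⟨hP.splitState hj (fun e he => (mem_erase.1 (hE'.mapsTo he)).1) fun i hi hij => ?_, ?_⟩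
  · obtain ⟨e, he, rfl⟩ := hE'.surjOn (mem_erase.2 ⟨hij, mem_range.2 (by omega)⟩)
    exact ⟨e, he, rfl⟩
  · rw [card_nbij π hE'.mapsTo hE'.injOn hE'.surjOn, card_erase_of_mem (mem_range.2 (by omega)),
      card_range]
    omega

/-- A split state with `n - 2` edges is obtained by choosing a position `j` to cut and one edge
from each of the other bundles. -/
lemma sum_prod_card_le_Nst (hP : G.IsPathLike n v π) :
    ∑ j ∈ range (n - 1), ∏ i ∈ (range (n - 1)).erase j, #{e | π e = i} ≤
      G.Nst (v 0) (v (n - 1)) (n - 2) := by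
  set R := range (n - 1)
  set D := R.sigma fun j => (R.erase j).pi fun i => ({e | π e = i} : Finset G.E)
  let Φ : (Σ j : ℕ, ∀ i ∈ R.erase j, G.E) → Finset G.E := fun x =>
    (R.erase x.1).attach.image fun i => x.2 i.1 i.2
  have hπ : ∀ x ∈ D, ∀ i hi, π (x.2 i hi) = i := fun x hx i hi => by
    simpa using mem_pi.1 (mem_sigma.1 hx).2 i hi
  have hbij : ∀ x ∈ D, Set.BijOn π (Φ x) (R.erase x.1) := by
    intro x hx
    refine ⟨?_, ?_, fun i hi =>
      ⟨x.2 i hi, mem_image.2 ⟨⟨i, hi⟩, mem_attach _ _, rfl⟩, hπ x hx i hi⟩⟩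
    · rintro _ he
      obtain ⟨⟨i, hi⟩, -, rfl⟩ := mem_image.1 he
      rwa [hπ x hx i hi]
    · rintro _ he _ he' h
      obtain ⟨⟨i, hi⟩, -, rfl⟩ := mem_image.1 he
      obtain ⟨⟨i', hi'⟩, -, rfl⟩ := mem_image.1 he'
      obtain rfl : i = i' := by rwa [hπ x hx, hπ x hx] at h
      rfl
  calc ∑ j ∈ R, ∏ i ∈ R.erase j, #{e | π e = i} = #D := by simp [D, card_sigma]
    _ ≤ _ := by
      refine card_le_card_of_injOn Φ (fun x hx => ?_) fun x hx y hy hxy => ?_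
      · have hj : x.1 + 1 < n := by have := (mem_sigma.1 hx).1; simp [R] at this; omega
        obtain ⟨hsplit, hcard⟩ := hP.splitState_of_bijOn hj (hbij x hx)
        simp [hsplit, hcard]
      · obtain ⟨j, f⟩ := x
        obtain ⟨j', f'⟩ := y
        have hR : R.erase j = R.erase j' := by
          have := (hbij _ hx).image_eq.symm.trans (hxy ▸ (hbij _ hy).image_eq)
          exact_mod_cast this
        obtain rfl : j = j' := R.erase_injOn (mem_sigma.1 hx).1 (mem_sigma.1 hy).1 hR
        congr
        funext i hi
        have hfi : f i hi ∈ Φ ⟨j, f'⟩ := hxy ▸ mem_image.2 ⟨⟨i, hi⟩, mem_attach _ _, rfl⟩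
        obtain ⟨⟨i', hi'⟩, -, hfi⟩ := mem_image.1 hfi
        obtain rfl : i' = i := by
          simpa [hπ _ hx, hπ _ hy] using congrArg π hfi
        exact hfi.symm

end IsPathLike

def finMod {n : ℕ} (hn : 0 < n) (i : ℕ) : Fin n := ⟨i % n, Nat.mod_lt i hn⟩

lemma finMod_of_lt {n : ℕ} (hn : 0 < n) {i : ℕ} (hi : i < n) : finMod hn i = ⟨i, hi⟩ :=
  Fin.ext (Nat.mod_eq_of_lt hi)

lemma finMod_injOn {n : ℕ} (hn : 0 < n) : Set.InjOn (finMod hn) (Set.Iio n) := fun i hi j hj h => by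
  rw [finMod_of_lt hn hi, finMod_of_lt hn hj] at h
  exact Fin.mk.inj_iff.1 h

lemma card_le_card_filter_of_finMod {m : ℕ} (hm : 0 < m) {T : Finset ℕ} (hT : ∀ t ∈ T, t < m)
    {p : Fin m → Prop} [DecidablePred p] (hp : ∀ t ∈ T, p (finMod hm t)) : #T ≤ #{e | p e} :=
  card_le_card_of_injOn (finMod hm) (fun t ht => by simpa using hp t ht)
    ((finMod_injOn hm).mono fun t ht => hT t ht)

lemma isPathLike_Gnm {n m k : ℕ} (hk : k < n - 1) (hm : n - 1 ≤ m) :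
    (Gnm n m k hk).IsPathLike n (finMod (by omega)) fun e : Fin m =>
      if e.val < n - 1 then e.val else k where
  lt e := by split <;> omega
  ends e := by
    simp only [Gnm]
    split_ifs <;> rw [finMod_of_lt _ (by omega), finMod_of_lt _ (by omega)]
  injOn := finMod_injOn _
  surj := fun u : Fin n => ⟨u.val, u.isLt, finMod_of_lt _ u.isLt⟩
  cover i hi := ⟨⟨i, by omega⟩, if_pos (by simp; omega)⟩

lemma isPathLike_Gnm2 {n m k₁ k₂ : ℕ} (hk₁ : k₁ < n - 1) (hk₂ : k₂ < n - 1) (hm : n - 1 ≤ m) :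
    (Gnm2 n m k₁ k₂ hk₁ hk₂).IsPathLike n (finMod (by omega)) fun e : Fin m =>
      if e.val < n - 1 then e.val else if e.val = n - 1 then k₁ else k₂ where
  lt e := by split_ifs <;> omega
  ends e := by
    simp only [Gnm2]
    split_ifs <;> rw [finMod_of_lt _ (by omega), finMod_of_lt _ (by omega)]
  injOn := finMod_injOn _
  surj := fun u : Fin n => ⟨u.val, u.isLt, finMod_of_lt _ u.isLt⟩
  cover i hi := ⟨⟨i, by omega⟩, if_pos (by simp; omega)⟩

/-- The bundle sizes `2, m - n + 1, 1, …, 1` of `Gnm2 n m 0 1`, written as a product so that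
products over positions split. -/
lemma le_card_filter_Gnm2 {n m : ℕ} (hn : 4 ≤ n) (hm : n < m) {i : ℕ} (hi : i < n - 1) :
    (if i = 0 then 2 else 1) * (if i = 1 then m - n + 1 else 1) ≤
      #{e : Fin m | (if e.val < n - 1 then e.val else if e.val = n - 1 then 0 else 1) = i} := by
  have key : ∀ T : Finset ℕ, (∀ t ∈ T, t < m ∧
      (if t < n - 1 then t else if t = n - 1 then 0 else 1) = i) →
      #T ≤ #{e : Fin m | (if e.val < n - 1 then e.val else if e.val = n - 1 then 0 else 1) = i} :=
    fun T hT => card_le_card_filter_of_finMod (by omega) (fun t ht => (hT t ht).1) fun t ht => by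
      rw [finMod_of_lt _ (hT t ht).1]
      exact (hT t ht).2
  obtain rfl | rfl | hi01 : i = 0 ∨ i = 1 ∨ (i ≠ 0 ∧ i ≠ 1) := by omega
  · simpa [card_pair (show 0 ≠ n - 1 by omega)] using
      key {0, n - 1} (by simp only [mem_insert, mem_singleton]; grind)
  · simpa [card_insert_of_notMem (show 1 ∉ Ico n m by simp; omega), add_comm] using
      key (insert 1 (Ico n m)) (by simp only [mem_insert, mem_Ico]; grind)
  · simpa [hi01] using key {i} (by simp only [mem_singleton]; grind)

lemma sum_prod_erase_two_mul (n a : ℕ) (hn : 3 ≤ n) :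
    ∑ j ∈ range (n - 1), ∏ i ∈ (range (n - 1)).erase j,
      (if i = 0 then 2 else 1) * (if i = 1 then a else 1) = a + 2 + (n - 3) * (2 * a) := by
  obtain ⟨k, rfl⟩ : ∃ k, n = k + 3 := ⟨n - 3, by omega⟩
  simp only [prod_mul_distrib, prod_ite_eq', mem_erase, mem_range]
  rw [show k + 3 - 1 = k + 2 by omega, sum_range_succ', sum_range_succ']
  simp
  ring

section SplitEdges

variable (G : Multigraph) (s t : G.V)

/-- In a connected graph, these are the bridges separating `s` from `t`. -/
noncomputable def splitEdges : Finset G.E := {e | G.SplitState s t (univ.erase e)}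

def cutSide (b : G.E) : Set G.V := {v | (G.subgraph (univ.erase b)).Reachable v s}

noncomputable def level (v : G.V) : ℕ := #{b ∈ G.splitEdges s t | v ∉ G.cutSide s b}

variable {G s t}

lemma Nst_card_sub_one_le (hE : 0 < Fintype.card G.E) :
    G.Nst s t (Fintype.card G.E - 1) ≤ #(G.splitEdges s t) := by
  refine (card_le_card fun E' hE' => ?_).trans (card_image_le (f := (univ.erase ·)))
  obtain ⟨hcard, hsplit⟩ := (mem_filter.1 hE').2
  obtain ⟨e, he⟩ := card_eq_one.1 (show #E'ᶜ = 1 by rw [card_compl, hcard]; omega)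
  have hE'e : E' = univ.erase e := by rw [← compl_singleton, ← he, compl_compl]
  exact mem_image.2 ⟨e, mem_filter.2 ⟨mem_univ e, hE'e ▸ hsplit⟩, hE'e.symm⟩

lemma self_mem_cutSide (b : G.E) : s ∈ G.cutSide s b := Reachable.refl s

lemma mem_cutSide_iff_of_ne {b e : G.E} (he : e ≠ b) {u w : G.V} (h : G.ends e = s(u, w)) :
    u ∈ G.cutSide s b ↔ w ∈ G.cutSide s b :=
  have huw := G.reachable_of_ends (mem_erase.2 ⟨he, mem_univ e⟩) h
  ⟨huw.symm.trans, huw.trans⟩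

lemma notMem_cutSide_iff {b : G.E} (hb : b ∈ G.splitEdges s t) {v : G.V} :
    v ∉ G.cutSide s b ↔ (G.subgraph (univ.erase b)).Reachable v t :=
  ⟨fun hv => (((mem_filter.1 hb).2.2 v).resolve_left hv),
    fun hvt hvs => (mem_filter.1 hb).2.1 (hvs.symm.trans hvt)⟩

lemma exists_ends_eq_of_mem_splitEdges (hG : G.Connected) {b : G.E} (hb : b ∈ G.splitEdges s t) :
    ∃ x y, G.ends b = s(x, y) ∧ x ∈ G.cutSide s b ∧ y ∉ G.cutSide s b := by
  obtain ⟨x, y, hxy⟩ := G.exists_ends_eq b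
  have hcross : ¬ (x ∈ G.cutSide s b ↔ y ∈ G.cutSide s b) := by
    intro hiff
    refine (notMem_cutSide_iff hb).2 (Reachable.refl t) ?_
    refine (G.mem_iff_of_reachable (fun e _ u w h => ?_) (hG.preconnected s t)).1
      (self_mem_cutSide b)
    obtain rfl | heb := eq_or_ne e b
    · rw [hxy, Sym2.eq_iff] at h
      rcases h with ⟨rfl, rfl⟩ | ⟨rfl, rfl⟩
      exacts [hiff, hiff.symm]
    · exact mem_cutSide_iff_of_ne heb h
  by_cases hx : x ∈ G.cutSide s b
  · exact ⟨x, y, hxy, hx, fun hy => hcross (iff_of_true hx hy)⟩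
  · exact ⟨y, x, hxy.trans Sym2.eq_swap, by_contra fun hy => hcross (iff_of_false hx hy), hx⟩

/-- If no edge but `b` crosses `X` and both ends of `b'` lie in `X`, then a `b`-avoiding walk
starting outside `X` never enters `X`, so it also avoids `b'`. -/
lemma reachable_erase_of_reachable_erase {b b' : G.E} {X : Set G.V}
    (hX : ∀ e ≠ b, ∀ u w, G.ends e = s(u, w) → (u ∈ X ↔ w ∈ X)) (hb' : ∀ u ∈ G.ends b', u ∈ X)
    {v r : G.V} (h : (G.subgraph (univ.erase b)).Reachable v r) (hv : v ∉ X) :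
    (G.subgraph (univ.erase b')).Reachable v r := by
  set R : Set G.V := {w | (G.subgraph (univ.erase b')).Reachable w r}
  refine ((G.mem_iff_of_reachable (S := X ∪ R) (fun e he u w hends => ?_) h).2
    (.inr (Reachable.refl r))).resolve_left hv
  have hXuw := hX e (mem_erase.1 he).1 u w hends
  by_cases hu : u ∈ X
  · exact iff_of_true (.inl hu) (.inl (hXuw.1 hu))
  · have heb' : e ≠ b' := by
      rintro rfl
      exact hu (hb' u (hends ▸ Sym2.mem_mk_left u w))
    have huw := G.reachable_of_ends (mem_erase.2 ⟨heb', mem_univ e⟩) hends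
    simp only [Set.mem_union, hu, ← hXuw, false_or]
    exact ⟨huw.symm.trans, huw.trans⟩

lemma cutSide_subset_or_subset {b b' : G.E} (hb : b ∈ G.splitEdges s t)
    (hb' : b' ∈ G.splitEdges s t) (hne : b ≠ b') :
    G.cutSide s b ⊆ G.cutSide s b' ∨ G.cutSide s b' ⊆ G.cutSide s b := by
  obtain ⟨x, y, hxy⟩ := G.exists_ends_eq b'
  have hends : ∀ u ∈ G.ends b', (u ∈ G.cutSide s b ↔ x ∈ G.cutSide s b) := by
    rw [hxy]
    intro u hu
    rcases Sym2.mem_iff.1 hu with rfl | rfl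
    exacts [Iff.rfl, (mem_cutSide_iff_of_ne hne.symm hxy).symm]
  by_cases hx : x ∈ G.cutSide s b
  · refine .inr fun v hv => by_contra fun hvb => (notMem_cutSide_iff hb').2 ?_ hv
    exact reachable_erase_of_reachable_erase (fun e he u w => mem_cutSide_iff_of_ne he)
      (fun u hu => (hends u hu).2 hx) ((notMem_cutSide_iff hb).1 hvb) hvb
  · refine .inl fun v hv => ?_
    exact reachable_erase_of_reachable_erase (X := (G.cutSide s b)ᶜ)
      (fun e he u w h => not_congr (mem_cutSide_iff_of_ne he h))
      (fun u hu => mt (hends u hu).1 hx) hv (not_not.2 hv)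

lemma level_self : G.level s t s = 0 :=
  card_eq_zero.2 (filter_eq_empty_iff.2 fun _ _ h => h (self_mem_cutSide _))

lemma level_lt {b : G.E} (hb : b ∈ G.splitEdges s t) {u v : G.V} (hu : u ∈ G.cutSide s b)
    (hv : v ∉ G.cutSide s b) : G.level s t u < G.level s t v := by
  refine card_lt_card ((ssubset_iff_of_subset fun b' hb' => ?_).2
    ⟨b, mem_filter.2 ⟨hb, hv⟩, fun h => (mem_filter.1 h).2 hu⟩)
  obtain ⟨hb'B, hub'⟩ := mem_filter.1 hb'
  refine mem_filter.2 ⟨hb'B, fun hvb' => ?_⟩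
  have hne : b ≠ b' := by rintro rfl; exact hub' hu
  rcases cutSide_subset_or_subset hb hb'B hne with h | h
  exacts [hub' (h hu), hv (h hvb')]

lemma level_eq_of_notMem_splitEdges {e : G.E} (he : e ∉ G.splitEdges s t) {u w : G.V}
    (h : G.ends e = s(u, w)) : G.level s t u = G.level s t w :=
  congrArg card (filter_congr fun _ hb =>
    not_congr (mem_cutSide_iff_of_ne (ne_of_mem_of_not_mem hb he).symm h))

/-- The cuts of the edges in `splitEdges s t` are nested, so the outer ends of these edges lie
on pairwise distinct positive levels. -/
lemma card_splitEdges_lt_card_image_level (hG : G.Connected) :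
    #(G.splitEdges s t) < #(univ.image (G.level s t)) := by
  set B := G.splitEdges s t
  have : Nonempty G.V := ⟨s⟩
  choose! x y hxy hx hy using fun b (hb : b ∈ B) => exists_ends_eq_of_mem_splitEdges hG hb
  have hlt : ∀ b ∈ B, ∀ b' ∈ B, b ≠ b' → G.cutSide s b ⊆ G.cutSide s b' →
      G.level s t (y b) < G.level s t (y b') := fun b hb b' hb' hne hsub =>
    level_lt hb' ((mem_cutSide_iff_of_ne hne (hxy b hb)).1 (hsub (hx b hb))) (hy b' hb')
  have hinj : Set.InjOn (fun b => G.level s t (y b)) B := by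
    intro b hb b' hb' h
    by_contra hne
    rcases cutSide_subset_or_subset hb hb' hne with hsub | hsub
    · exact (hlt b hb b' hb' hne hsub).ne h
    · exact (hlt b' hb' b hb (Ne.symm hne) hsub).ne h.symm
  have h0 : 0 ∉ B.image fun b => G.level s t (y b) := by
    simp only [mem_image, not_exists, not_and]
    intro b hb h
    exact (level_lt hb (self_mem_cutSide b) (hy b hb)).ne (level_self.trans h.symm)
  calc #B = #(B.image fun b => G.level s t (y b)) := (card_image_of_injOn hinj).symm
    _ < #(insert 0 (B.image fun b => G.level s t (y b))) := by rw [card_insert_of_notMem h0]; omega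
    _ ≤ #(univ.image (G.level s t)) := card_le_card <| insert_subset
        (mem_image.2 ⟨s, mem_univ s, level_self⟩)
        (image_subset_iff.2 fun b _ => mem_image_of_mem _ (mem_univ _))

/-- The levels then take exactly `n - 1` values: one level holds two vertices, which every edge
outside `splitEdges s t` must join. -/
theorem splitEdges_structure (hG : G.Connected)
    (hB : Fintype.card G.V ≤ #(G.splitEdges s t) + 2)
    (hm : Fintype.card G.V < Fintype.card G.E) :
    #(G.splitEdges s t) + 2 = Fintype.card G.V ∧
      ∃ z : Sym2 G.V, ∀ e ∉ G.splitEdges s t, G.ends e = z := by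
  have himage := card_splitEdges_lt_card_image_level (s := s) (t := t) hG
  have hle : #(univ.image (G.level s t)) ≤ Fintype.card G.V := card_image_le.trans card_univ.le
  obtain ⟨e₀, he₀⟩ : ∃ e, e ∉ G.splitEdges s t := by
    by_contra! h
    have := card_le_card fun e (_ : e ∈ univ) => h e
    rw [card_univ] at this
    omega
  obtain ⟨u, w, huw⟩ := G.exists_ends_eq e₀
  have hlevel := level_eq_of_notMem_splitEdges he₀ huw
  have hlt : #(univ.image (G.level s t)) < Fintype.card G.V := by
    refine hle.lt_of_ne fun h => G.ne_of_ends_eq huw ?_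
    exact card_image_iff.1 (h.trans card_univ.symm) (mem_univ u) (mem_univ w) hlevel
  refine ⟨by omega, s(u, w), fun e he => ?_⟩
  obtain ⟨u', w', huw'⟩ := G.exists_ends_eq e
  rw [huw']
  exact sym2_eq_of_card_le_card_image_add_one (by omega) (G.ne_of_ends_eq huw) hlevel
    (G.ne_of_ends_eq huw') (level_eq_of_notMem_splitEdges he huw')

/-- A split state with `n - 2` edges is a spanning forest, so it has no parallel edges. -/
lemma SplitState.injOn_ends {E' : Finset G.E} (h : G.SplitState s t E')
    (hcard : #E' + 2 = Fintype.card G.V) : Set.InjOn G.ends E' := by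
  intro e₁ he₁ e₂ he₂ hends
  by_contra hne
  have hsub : G.subgraph (E'.erase e₂) = G.subgraph E' := by
    ext u w
    refine ⟨fun ⟨huw, e, he, h⟩ => ⟨huw, e, mem_of_mem_erase he, h⟩, fun ⟨huw, e, he, h⟩ => ?_⟩
    obtain rfl | hne₂ := eq_or_ne e e₂
    · exact ⟨huw, e₁, mem_erase.2 ⟨hne, he₁⟩, hends.trans h⟩
    · exact ⟨huw, e, mem_erase.2 ⟨hne₂, he⟩, h⟩
  have := (show G.SplitState s t (E'.erase e₂) by rwa [SplitState, hsub]).card_le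
  rw [card_erase_of_mem he₂] at this
  have := card_pos.2 ⟨e₂, he₂⟩
  omega

theorem Nst_le_of_splitEdges (hB : #(G.splitEdges s t) + 2 = Fintype.card G.V) {z : Sym2 G.V}
    (hz : ∀ e ∉ G.splitEdges s t, G.ends e = z) :
    G.Nst s t (Fintype.card G.V - 2) ≤
      1 + #(G.splitEdges s t) * (Fintype.card G.E - #(G.splitEdges s t)) := by
  set B := G.splitEdges s t
  calc G.Nst s t (Fintype.card G.V - 2)
      ≤ #(insert B ((B ×ˢ Bᶜ).image fun x => insert x.2 (B.erase x.1))) := by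
        refine card_le_card fun E' hE' => ?_
        obtain ⟨hcard, hsplit⟩ := (mem_filter.1 hE').2
        have hinj := hsplit.injOn_ends (by omega)
        have hle : #(E' \ B) ≤ 1 := card_le_one.2 fun e he e' he' => by
          rw [mem_sdiff] at he he'
          exact hinj he.1 he'.1 ((hz e he.2).trans (hz e' he'.2).symm)
        rcases eq_or_eq_insert_erase_of_card_sdiff_le_one (by omega) hle with
          rfl | ⟨b, hb, e, he, rfl⟩
        · exact mem_insert_self _ _
        · exact mem_insert_of_mem (mem_image.2 ⟨(b, e), mem_product.2 ⟨hb, mem_compl.2 he⟩, rfl⟩)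
    _ ≤ 1 + #B * (Fintype.card G.E - #B) := by
        rw [← card_compl, ← card_product, add_comm]
        exact (card_insert_le _ _).trans (Nat.add_le_add_right card_image_le 1)

end SplitEdges

theorem exists_sRel_gt_of_Nst_lt {n m : ℕ} {G : Multigraph} {s t : G.V} (hG : G.Connected)
    (hV : Fintype.card G.V = n) (hE : Fintype.card G.E = m) (h : G.Nst s t (m - 1) < n - 2) :
    ∃ (H : Multigraph) (s' t' : H.V), H.Connected ∧ Fintype.card H.V = n ∧
      Fintype.card H.E = m ∧ s' ≠ t' ∧
      ∃ p : ℝ, 0 < p ∧ p < 1 ∧ G.sRel s t p < H.sRel s' t' p := by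
  have hk : 0 < n - 1 := by omega
  have hm : n - 1 ≤ m := by have := hG.card_le; omega
  have hm0 : 0 < m := by omega
  have hP := isPathLike_Gnm hk hm
  have hHE : Fintype.card (Gnm n m 0 hk).E = m := Fintype.card_fin m
  refine ⟨Gnm n m 0 hk, _, _, hP.connected, Fintype.card_fin n, hHE, hP.zero_ne (by omega),
    exists_sRel_lt_of_Nst_lt_of_eq_above G _ (hHE.trans hE.symm) (K := m - 1) (by omega)
      (fun i hi hi' => ?_) ?_⟩
  · have hH := Nst_card_eq_zero _ hP.connected (finMod (by omega) 0) (finMod (by omega) (n - 1))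
    have hG' := Nst_card_eq_zero G hG s t
    rw [hHE] at hH
    rw [hE] at hG' hi'
    rw [show i = m by omega, hG', hH]
  · -- the edges at positions `1, …, n - 2` are the only edges in their bundles
    have hS := hP.card_le_Nst_card_sub_one (S := (Ico 1 (n - 1)).image (finMod hm0))
      fun e he e' he' => by
        obtain ⟨t, ht, rfl⟩ := mem_image.1 he
        rw [mem_Ico] at ht
        rw [finMod_of_lt _ (show t < m by omega)] at he' ⊢
        simp only [show t < n - 1 by omega, if_true] at he'
        split_ifs at he'
        · exact Fin.ext he'
        · omega
    have hcard : #((Ico 1 (n - 1)).image (finMod hm0)) = n - 2 := by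
      rw [card_image_of_injOn ((finMod_injOn hm0).mono fun t ht => by
        simp only [coe_Ico, Set.mem_Ico] at ht; simp only [Set.mem_Iio]; omega), Nat.card_Ico]
      omega
    rw [hHE] at hS
    exact hE ▸ h.trans_le (hcard.ge.trans hS)

lemma one_add_mul_lt_of_four_le_of_lt {n m : ℕ} (hn : 4 ≤ n) (hm : n < m) :
    1 + (n - 2) * (m - (n - 2)) < m - n + 1 + 2 + (n - 3) * (2 * (m - n + 1)) := by
  obtain ⟨k, rfl⟩ : ∃ k, n = k + 4 := ⟨n - 4, by omega⟩
  obtain ⟨a, rfl⟩ : ∃ a, m = k + 5 + a := ⟨m - (k + 5), by omega⟩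
  simp only [show k + 4 - 2 = k + 2 by omega, show k + 5 + a - (k + 2) = a + 3 by omega,
    show k + 5 + a - (k + 4) + 1 = a + 2 by omega, show k + 4 - 3 = k + 1 by omega]
  nlinarith

theorem exists_sRel_gt_of_le_Nst {n m : ℕ} (hn : 4 ≤ n) (hm : n < m) {G : Multigraph}
    {s t : G.V} (hG : G.Connected) (hV : Fintype.card G.V = n) (hE : Fintype.card G.E = m)
    (h : n - 2 ≤ G.Nst s t (m - 1)) :
    ∃ (H : Multigraph) (s' t' : H.V), H.Connected ∧ Fintype.card H.V = n ∧
      Fintype.card H.E = m ∧ s' ≠ t' ∧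
      ∃ p : ℝ, 0 < p ∧ p < 1 ∧ G.sRel s t p < H.sRel s' t' p := by
  have hNB := Nst_card_sub_one_le (s := s) (t := t) (show 0 < Fintype.card G.E by omega)
  rw [hE] at hNB
  obtain ⟨hB, z, hz⟩ := splitEdges_structure (s := s) (t := t) hG (by omega) (by omega)
  have hGN := Nst_le_of_splitEdges hB hz
  rw [hV, hE, show #(G.splitEdges s t) = n - 2 by omega] at hGN
  have hk₁ : 0 < n - 1 := by omega
  have hk₂ : 1 < n - 1 := by omega
  have hP := isPathLike_Gnm2 (m := m) hk₁ hk₂ (by omega)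
  have hHE : Fintype.card (Gnm2 n m 0 1 hk₁ hk₂).E = m := Fintype.card_fin m
  refine ⟨Gnm2 n m 0 1 hk₁ hk₂, _, _, hP.connected, Fintype.card_fin n, hHE, hP.zero_ne (by omega),
    exists_sRel_lt_of_Nst_lt_of_eq_below G _ (hHE.trans hE.symm) (K := n - 2) (by omega)
      (fun i hi => ?_) ?_⟩
  · exact (G.Nst_eq_zero_of_lt (by omega)).trans (Nst_eq_zero_of_lt _
      (show i + 2 < Fintype.card (Fin n) by rw [Fintype.card_fin]; omega)).symm
  · calc G.Nst s t (n - 2) ≤ 1 + (n - 2) * (m - (n - 2)) := hGN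
      _ < m - n + 1 + 2 + (n - 3) * (2 * (m - n + 1)) := one_add_mul_lt_of_four_le_of_lt hn hm
      _ = ∑ j ∈ range (n - 1), ∏ i ∈ (range (n - 1)).erase j,
            (if i = 0 then 2 else 1) * (if i = 1 then m - n + 1 else 1) :=
        (sum_prod_erase_two_mul n _ (by omega)).symm
      _ ≤ _ := sum_le_sum fun j _ => prod_le_prod' fun i hi =>
          le_card_filter_Gnm2 hn hm (by simp at hi; omega)
      _ ≤ _ := hP.sum_prod_card_le_Nst

end Multigraph

theorem no_optimal_of_four_le_of_lt_general (n m : ℕ) (hn : 4 ≤ n) (hm : n < m)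
    (G : Multigraph) (s t : G.V) (hG : G.Connected)
    (hV : Fintype.card G.V = n) (hE : Fintype.card G.E = m) :
    ∃ (H : Multigraph) (s' t' : H.V), H.Connected ∧ Fintype.card H.V = n ∧
      Fintype.card H.E = m ∧ s' ≠ t' ∧
      ∃ p : ℝ, 0 < p ∧ p < 1 ∧ G.sRel s t p < H.sRel s' t' p := by
  rcases lt_or_ge (G.Nst s t (m - 1)) (n - 2) with h | h
  · exact Multigraph.exists_sRel_gt_of_Nst_lt hG hV hE h
  · exact Multigraph.exists_sRel_gt_of_le_Nst hn hm hG hV hE h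

/-- If `n ≥ 4` and `m > n`, then there is no optimal `(n,m)`-graph: for
every connected `(n,m)`-multigraph `G` with distinct terminals `s, t` there is a connected
`(n,m)`-multigraph `H` with distinct terminals `s', t'` and some `p ∈ (0,1)` with
`sRel(H,s',t';p) > sRel(G,s,t;p)`. -/
theorem no_optimal_of_four_le_of_lt (n m : ℕ) (hn : 4 ≤ n) (hm : n < m)
    (G : Multigraph) (s t : G.V) (hG : G.Connected)
    (hV : Fintype.card G.V = n) (hE : Fintype.card G.E = m) (hst : s ≠ t) :
    ∃ (H : Multigraph) (s' t' : H.V), H.Connected ∧ Fintype.card H.V = n ∧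
      Fintype.card H.E = m ∧ s' ≠ t' ∧
      ∃ p : ℝ, 0 < p ∧ p < 1 ∧ G.sRel s t p < H.sRel s' t' p :=
  no_optimal_of_four_le_of_lt_general n m hn hm G s t hG hV hE
end

section
/- Let m ≥ 2 and 1 ≤ a ≤ m-1, and let B be the multigraph on vertices s, v, t consisting of a bundle of a parallel edges between s and v and a bundle of m-a parallel edges between v and t, with terminals s and t. Then for all p ∈ [0,1], sRel(B,s,t;p) = (1-p)^a + (1-p)^{m-a} - 2(1-p)^m. Moreover, for all p ∈ (0,1) and all a with 2 ≤ a ≤ m-a, we have (1-p)^{a-1} + (1-p)^{m-a+1} > (1-p)^a + (1-p)^{m-a}; hence among all such graphs B, the split reliability is uniformly largest exactly when a = 1 or a = m-1. -/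
/-!
In the spanning subgraph with edge set `E'`, the middle vertex is joined to `s` iff `E'` meets
the `s`–`v` bundle `L`, and to `t` iff `E'` meets the other bundle `Lᶜ`. Hence `E'` splits `s`
from `t` exactly when `E' ⊆ L` xor `E' ⊆ Lᶜ`. By the binomial theorem the subsets of a bundle
of size `k` carry total weight `(1 - p) ^ (m - k)`, and the empty set, counted for both bundles,
weighs `(1 - p) ^ m`.

With `x = 1 - p`, comparing bundle sizes comes down to
`x + x ^ (c + d + 1) - x ^ (c + 1) - x ^ (d + 1) = x (1 - x ^ c) (1 - x ^ d) ≥ 0`,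
which is strict for `0 < x < 1` unless `c = 0` or `d = 0`.
-/

open Finset

section Bernoulli

variable {α R : Type*} [Fintype α] [CommRing R]

theorem sum_powerset_pow_mul_one_sub_pow (S : Finset α) (p : R) :
    ∑ E ∈ S.powerset, p ^ #E * (1 - p) ^ (Fintype.card α - #E) =
      (1 - p) ^ (Fintype.card α - #S) := by
  calc ∑ E ∈ S.powerset, p ^ #E * (1 - p) ^ (Fintype.card α - #E)
      = (1 - p) ^ (Fintype.card α - #S) * ∑ E ∈ S.powerset, p ^ #E * (1 - p) ^ (#S - #E) := by
        rw [mul_sum]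
        refine sum_congr rfl fun E hE => ?_
        have hES : #E ≤ #S := card_le_card (mem_powerset.mp hE)
        have hS : #S ≤ Fintype.card α := card_le_univ S
        rw [show Fintype.card α - #E = (Fintype.card α - #S) + (#S - #E) by omega, pow_add]
        ring
    _ = (1 - p) ^ (Fintype.card α - #S) := by
        rw [sum_pow_mul_eq_add_pow, add_sub_cancel, one_pow, mul_one]

theorem sum_ite_xor_subset_subset_compl [DecidableEq α] (S : Finset α) (f : Finset α → R) :
    ∑ E, (if Xor (E ⊆ S) (E ⊆ Sᶜ) then f E else 0) =
      ∑ E ∈ S.powerset, f E + ∑ E ∈ Sᶜ.powerset, f E - 2 * f ∅ := by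
  have pointwise : ∀ E : Finset α, (if Xor (E ⊆ S) (E ⊆ Sᶜ) then f E else 0) =
      (if E ⊆ S then f E else 0) + (if E ⊆ Sᶜ then f E else 0) -
        2 * (if E = ∅ then f E else 0) := by
    intro E
    by_cases h₁ : E ⊆ S <;> by_cases h₂ : E ⊆ Sᶜ
    · obtain rfl : E = ∅ := subset_empty.mp (inter_compl S ▸ subset_inter h₁ h₂)
      simp only [xor_self, if_true, if_false, empty_subset]
      ring
    all_goals
      have hE : E ≠ ∅ := by rintro rfl; simp_all
      simp [h₁, h₂, hE]
  simp only [sum_congr rfl fun E _ => pointwise E, sum_sub_distrib, sum_add_distrib, ← mul_sum,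
    sum_ite_eq', mem_univ, if_true, ← sum_filter, filter_subset_univ]

end Bernoulli

section PowerInequalities

variable {R : Type*} [CommRing R] [LinearOrder R] [IsStrictOrderedRing R] {x : R}

theorem pow_succ_add_pow_lt_pow_add_pow_succ (hx0 : 0 < x) (hx1 : x < 1) {i j : ℕ} (hij : i < j) :
    x ^ (i + 1) + x ^ j < x ^ i + x ^ (j + 1) := by
  have hji : x ^ j < x ^ i := pow_lt_pow_right_of_lt_one₀ hx0 hx1 hij
  have key : x ^ i + x ^ (j + 1) - (x ^ (i + 1) + x ^ j) = (x ^ i - x ^ j) * (1 - x) := by ring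
  linarith [mul_pos (sub_pos.mpr hji) (sub_pos.mpr hx1)]

theorem pow_succ_add_pow_succ_le_self_add_pow (hx0 : 0 ≤ x) (hx1 : x ≤ 1) (c d : ℕ) :
    x ^ (c + 1) + x ^ (d + 1) ≤ x + x ^ (c + d + 1) := by
  have key : x + x ^ (c + d + 1) - (x ^ (c + 1) + x ^ (d + 1)) = x * (1 - x ^ c) * (1 - x ^ d) := by
    ring
  have := mul_nonneg (mul_nonneg hx0 (sub_nonneg.mpr (pow_le_one₀ hx0 hx1 (n := c))))
    (sub_nonneg.mpr (pow_le_one₀ hx0 hx1 (n := d)))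
  linarith

theorem pow_succ_add_pow_succ_lt_self_add_pow (hx0 : 0 < x) (hx1 : x < 1) {c d : ℕ} (hc : c ≠ 0)
    (hd : d ≠ 0) : x ^ (c + 1) + x ^ (d + 1) < x + x ^ (c + d + 1) := by
  have key : x + x ^ (c + d + 1) - (x ^ (c + 1) + x ^ (d + 1)) = x * (1 - x ^ c) * (1 - x ^ d) := by
    ring
  have := mul_pos (mul_pos hx0 (sub_pos.mpr (pow_lt_one₀ hx0.le hx1 hc)))
    (sub_pos.mpr (pow_lt_one₀ hx0.le hx1 hd))
  linarith

end PowerInequalities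

def pathFin3 (X Y : Prop) : SimpleGraph (Fin 3) :=
  SimpleGraph.fromEdgeSet ({e | X ∧ e = s(0, 1)} ∪ {e | Y ∧ e = s(1, 2)})

theorem pathFin3_splits_iff (X Y : Prop) :
    (¬ (pathFin3 X Y).Reachable 0 2 ∧
        ∀ v, (pathFin3 X Y).Reachable v 0 ∨ (pathFin3 X Y).Reachable v 2) ↔ Xor X Y := by
  by_cases hX : X <;> by_cases hY : Y <;>
    simp only [pathFin3, hX, hY, true_and, false_and] <;> decide

namespace Multigraph

variable {a b m : ℕ} {p : ℝ}

theorem doubleBundle_subgraph (E' : Finset (Fin (a + b))) :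
    (doubleBundle a b).subgraph E' =
      pathFin3 (∃ e ∈ E', e.val < a) (∃ e ∈ E', a ≤ e.val) := by
  ext u v
  change (u ≠ v ∧ ∃ e ∈ E', (doubleBundle a b).ends e = s(u, v)) ↔ _
  simp only [pathFin3, doubleBundle]
  constructor
  · rintro ⟨huv, e, he, hends⟩
    refine ⟨?_, huv⟩
    by_cases hea : e.val < a
    · exact Or.inl ⟨⟨e, he, hea⟩, by simpa [hea] using hends.symm⟩
    · exact Or.inr ⟨⟨e, he, not_lt.mp hea⟩, by simpa [hea] using hends.symm⟩
  · rintro ⟨⟨⟨e, he, hea⟩, huv⟩ | ⟨⟨e, he, hea⟩, huv⟩, hne⟩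
    · exact ⟨hne, e, he, by simp [hea, huv]⟩
    · exact ⟨hne, e, he, by simp [not_lt.mpr hea, huv]⟩

def leftBundle (a b : ℕ) : Finset (Fin (a + b)) := {e | e.val < a}

theorem card_leftBundle : #(leftBundle a b) = a := by
  simp [leftBundle, Fin.card_filter_val_lt]

theorem card_compl_leftBundle : #(leftBundle a b)ᶜ = b := by
  rw [card_compl, card_leftBundle, Fintype.card_fin, add_tsub_cancel_left]

theorem doubleBundle_splitState_iff (E' : Finset (Fin (a + b))) :
    (doubleBundle a b).SplitState (0 : Fin 3) (2 : Fin 3) E' ↔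
      Xor (E' ⊆ leftBundle a b) (E' ⊆ (leftBundle a b)ᶜ) := by
  unfold SplitState
  rw [doubleBundle_subgraph]
  refine (pathFin3_splits_iff _ _).trans ?_
  rw [← xor_not_not, xor_comm]
  simp only [leftBundle, subset_iff, mem_compl, mem_filter_univ, not_exists, not_and, not_lt,
    not_le]

theorem sRel_doubleBundle_eq :
    (doubleBundle a b).sRel (0 : Fin 3) (2 : Fin 3) p =
      (1 - p) ^ a + (1 - p) ^ b - 2 * (1 - p) ^ (a + b) := by
  classical
  unfold sRel
  refine (sum_congr rfl fun E' _ => if_congr (doubleBundle_splitState_iff E') rfl rfl).trans ?_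
  change ∑ E' : Finset (Fin (a + b)),
    (if Xor (E' ⊆ leftBundle a b) (E' ⊆ (leftBundle a b)ᶜ) then
      p ^ #E' * (1 - p) ^ (Fintype.card (Fin (a + b)) - #E') else 0) = _
  rw [sum_ite_xor_subset_subset_compl, sum_powerset_pow_mul_one_sub_pow,
    sum_powerset_pow_mul_one_sub_pow, card_leftBundle, card_compl_leftBundle, Fintype.card_fin,
    card_empty, pow_zero, one_mul, Nat.sub_zero, add_tsub_cancel_left, add_tsub_cancel_right]
  ring

theorem sRel_doubleBundle_comm :
    (doubleBundle a b).sRel (0 : Fin 3) (2 : Fin 3) p =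
      (doubleBundle b a).sRel (0 : Fin 3) (2 : Fin 3) p := by
  rw [sRel_doubleBundle_eq, sRel_doubleBundle_eq, add_comm a b]
  ring

theorem sRel_doubleBundle_sub_eq (hb : b ≤ m) :
    (doubleBundle b (m - b)).sRel (0 : Fin 3) (2 : Fin 3) p =
      (1 - p) ^ b + (1 - p) ^ (m - b) - 2 * (1 - p) ^ m := by
  rw [sRel_doubleBundle_eq, Nat.add_sub_cancel' hb]

theorem sRel_doubleBundle_le_sRel_doubleBundle_one (hb1 : 1 ≤ b) (hbm : b < m) (hp0 : 0 ≤ p)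
    (hp1 : p ≤ 1) :
    (doubleBundle b (m - b)).sRel (0 : Fin 3) (2 : Fin 3) p ≤
      (doubleBundle 1 (m - 1)).sRel (0 : Fin 3) (2 : Fin 3) p := by
  have h := pow_succ_add_pow_succ_le_self_add_pow (x := 1 - p) (by linarith) (by linarith)
    (b - 1) (m - b - 1)
  rw [Nat.sub_add_cancel hb1, Nat.sub_add_cancel (by omega : 1 ≤ m - b),
    show b - 1 + (m - b - 1) + 1 = m - 1 by omega] at h
  rw [sRel_doubleBundle_sub_eq hbm.le, sRel_doubleBundle_sub_eq (by omega), pow_one]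
  linarith

theorem sRel_doubleBundle_lt_sRel_doubleBundle_one (hb2 : 2 ≤ b) (hbm : b + 2 ≤ m)
    (hp0 : 0 < p) (hp1 : p < 1) :
    (doubleBundle b (m - b)).sRel (0 : Fin 3) (2 : Fin 3) p <
      (doubleBundle 1 (m - 1)).sRel (0 : Fin 3) (2 : Fin 3) p := by
  have h := pow_succ_add_pow_succ_lt_self_add_pow (x := 1 - p) (by linarith) (by linarith)
    (c := b - 1) (d := m - b - 1) (by omega) (by omega)
  rw [Nat.sub_add_cancel (by omega : 1 ≤ b), Nat.sub_add_cancel (by omega : 1 ≤ m - b),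
    show b - 1 + (m - b - 1) + 1 = m - 1 by omega] at h
  rw [sRel_doubleBundle_sub_eq (by omega), sRel_doubleBundle_sub_eq (by omega), pow_one]
  linarith

end Multigraph

theorem sRel_doubleBundle_general (m : ℕ) :
    (∀ a : ℕ, 1 ≤ a → a ≤ m - 1 → ∀ p : ℝ, 0 ≤ p → p ≤ 1 →
      (Multigraph.doubleBundle a (m - a)).sRel (0 : Fin 3) (2 : Fin 3) p =
        (1 - p) ^ a + (1 - p) ^ (m - a) - 2 * (1 - p) ^ m) ∧
    (∀ a : ℕ, 2 ≤ a → a ≤ m - a → ∀ p : ℝ, 0 < p → p < 1 →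
      (1 - p) ^ a + (1 - p) ^ (m - a) < (1 - p) ^ (a - 1) + (1 - p) ^ (m - a + 1)) ∧
    (∀ a : ℕ, 1 ≤ a → a ≤ m - 1 →
      ((∀ b : ℕ, 1 ≤ b → b ≤ m - 1 → ∀ p : ℝ, 0 < p → p < 1 →
          (Multigraph.doubleBundle b (m - b)).sRel (0 : Fin 3) (2 : Fin 3) p ≤
            (Multigraph.doubleBundle a (m - a)).sRel (0 : Fin 3) (2 : Fin 3) p) ↔
        (a = 1 ∨ a = m - 1))) := by
  refine ⟨fun a _ ha p _ _ => Multigraph.sRel_doubleBundle_sub_eq (m := m) (by omega),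
    fun a ha2 ham p hp0 hp1 => ?_, fun a ha1 ham => ⟨fun hmax => ?_, ?_⟩⟩
  · have h := pow_succ_add_pow_lt_pow_add_pow_succ (x := 1 - p) (by linarith) (by linarith)
      (show a - 1 < m - a by omega)
    rwa [Nat.sub_add_cancel (by omega : 1 ≤ a)] at h
  · by_contra hne
    have hlt := Multigraph.sRel_doubleBundle_lt_sRel_doubleBundle_one (m := m) (b := a)
      (p := 1 / 2) (by omega) (by omega) (by norm_num) (by norm_num)
    exact hlt.not_ge (hmax 1 le_rfl (by omega) _ (by norm_num) (by norm_num))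
  · rintro (rfl | rfl) b hb1 hbm p hp0 hp1
    · exact Multigraph.sRel_doubleBundle_le_sRel_doubleBundle_one hb1 (by omega) hp0.le hp1.le
    · rw [Nat.sub_sub_self (by omega : 1 ≤ m), Multigraph.sRel_doubleBundle_comm (a := m - 1)]
      exact Multigraph.sRel_doubleBundle_le_sRel_doubleBundle_one hb1 (by omega) hp0.le hp1.le

/-- For the graph `B` on vertices `s, v, t` with a bundle of `a` edges
between `s` and `v` and `m-a` edges between `v` and `t` (terminals `s, t`):
`sRel(B,s,t;p) = (1-p)^a + (1-p)^{m-a} - 2(1-p)^m`; moreover for `2 ≤ a ≤ m-a` and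
`p ∈ (0,1)`, `(1-p)^{a-1} + (1-p)^{m-a+1} > (1-p)^a + (1-p)^{m-a}`; hence the split
reliability is uniformly largest exactly when `a = 1` or `a = m-1`. -/
theorem sRel_doubleBundle (m : ℕ) (hm : 2 ≤ m) :
    (∀ a : ℕ, 1 ≤ a → a ≤ m - 1 → ∀ p : ℝ, 0 ≤ p → p ≤ 1 →
      (Multigraph.doubleBundle a (m - a)).sRel (0 : Fin 3) (2 : Fin 3) p =
        (1 - p) ^ a + (1 - p) ^ (m - a) - 2 * (1 - p) ^ m) ∧
    (∀ a : ℕ, 2 ≤ a → a ≤ m - a → ∀ p : ℝ, 0 < p → p < 1 →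
      (1 - p) ^ a + (1 - p) ^ (m - a) < (1 - p) ^ (a - 1) + (1 - p) ^ (m - a + 1)) ∧
    (∀ a : ℕ, 1 ≤ a → a ≤ m - 1 →
      ((∀ b : ℕ, 1 ≤ b → b ≤ m - 1 → ∀ p : ℝ, 0 < p → p < 1 →
          (Multigraph.doubleBundle b (m - b)).sRel (0 : Fin 3) (2 : Fin 3) p ≤
            (Multigraph.doubleBundle a (m - a)).sRel (0 : Fin 3) (2 : Fin 3) p) ↔
        (a = 1 ∨ a = m - 1))) :=
  sRel_doubleBundle_general m
end
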